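/- If a is positive and differentiable and satisfies the vacuum Friedman equation 3(ȧ² + k)/a² - Λ = 0 with Λ > 0 and k = 0, then either a(t) = a(0)·exp(ωt) for all t or a(t) = a(0)·exp(-ωt) for all t, where ω = √(Λ/3), provided ȧ is continuous and never zero. -/

import Mathlib

/-! Clearing denominators gives `ȧ² = (ω a)²`. Both `ȧ` and `ω a` are continuous and `ω a` never
vanishes, so on the connected line `ȧ = ω a` everywhere or `ȧ = -ω a` everywhere. A solution of
`ȧ = c a` is `a(0) e^{ct}`, since `a(t) e^{-ct}` has zero derivative. -/

open Real Set

theorem eq_mul_exp_of_deriv_eq_const_mul {f : ℝ → ℝ} {c : ℝ} (hf : Differentiable ℝ f)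
    (h : ∀ t, deriv f t = c * f t) (t : ℝ) : f t = f 0 * exp (c * t) := by
  have hderiv : ∀ s, HasDerivAt (fun s => f s * exp (-(c * s))) 0 s := fun s => by
    have hexp : HasDerivAt (fun s => exp (-(c * s))) (exp (-(c * s)) * -c) s := by
      simpa using ((hasDerivAt_id s).const_mul c).neg.exp
    refine ((hf s).hasDerivAt.mul hexp).congr_deriv ?_
    rw [h s]
    ring
  have hconst : f t * exp (-(c * t)) = f 0 * exp (-(c * 0)) :=
    is_const_of_deriv_eq_zero (fun s => (hderiv s).differentiableAt)
      (fun s => (hderiv s).deriv) t 0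
  rw [mul_zero, neg_zero, exp_zero, mul_one, exp_neg, ← div_eq_mul_inv,
    div_eq_iff (exp_pos _).ne'] at hconst
  exact hconst

theorem sq_eq_sq_sqrt_mul_of_three_mul_sq_div_sq_sub_eq_zero {d x Λ : ℝ} (hΛ : 0 ≤ Λ)
    (hx : x ≠ 0) (h : 3 * d ^ 2 / x ^ 2 - Λ = 0) : d ^ 2 = (√(Λ / 3) * x) ^ 2 := by
  rw [sub_eq_zero, div_eq_iff (pow_ne_zero 2 hx)] at h
  rw [mul_pow, sq_sqrt (by positivity)]
  linarith

theorem deSitter_flat_solution_general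
    (a : ℝ → ℝ) (Λ : ℝ) (hΛ : 0 < Λ)
    (ha : Differentiable ℝ a) (hpos : ∀ t, 0 < a t)
    (hcont : Continuous (deriv a))
    (hEq : ∀ t, 3 * (deriv a t) ^ 2 / (a t) ^ 2 - Λ = 0) :
    (∀ t, a t = a 0 * Real.exp (Real.sqrt (Λ / 3) * t)) ∨
    (∀ t, a t = a 0 * Real.exp (-(Real.sqrt (Λ / 3)) * t)) := by
  set ω := √(Λ / 3)
  have hω : 0 < ω := sqrt_pos.2 (by positivity)
  have hsq : EqOn (deriv a ^ 2) ((fun t => ω * a t) ^ 2) univ := fun t _ =>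
    sq_eq_sq_sqrt_mul_of_three_mul_sq_div_sq_sub_eq_zero hΛ.le (hpos t).ne' (hEq t)
  rcases isPreconnected_univ.eq_or_eq_neg_of_sq_eq hcont.continuousOn
      (continuous_const.mul ha.continuous).continuousOn hsq
      (fun {t} _ => (mul_pos hω (hpos t)).ne') with h | h
  · exact .inl (eq_mul_exp_of_deriv_eq_const_mul ha fun t => h (mem_univ t))
  · refine .inr (eq_mul_exp_of_deriv_eq_const_mul ha fun t => ?_)
    rw [h (mem_univ t), neg_mul]
    rfl

theorem deSitter_flat_solution
    (a : ℝ → ℝ) (Λ : ℝ) (hΛ : 0 < Λ)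
    (ha : Differentiable ℝ a) (hpos : ∀ t, 0 < a t)
    (hcont : Continuous (deriv a)) (hne : ∀ t, deriv a t ≠ 0)
    (hEq : ∀ t, 3 * (deriv a t) ^ 2 / (a t) ^ 2 - Λ = 0) :
    (∀ t, a t = a 0 * Real.exp (Real.sqrt (Λ / 3) * t)) ∨
    (∀ t, a t = a 0 * Real.exp (-(Real.sqrt (Λ / 3)) * t)) :=
  deSitter_flat_solution_general a Λ hΛ ha hpos hcont hEq
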